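/- In the ring of formal power series in two variables X, Y over ℚ, the generating function G = Σ_{n≥1} Σ_{k≥1} p_{n,k} X^k Y^n satisfies (1 − Y − X·Y²)·G = X·Y; equivalently, G = XY/(1 − Y − XY²). -/

import Mathlib

/-- `F n` is the Fibonacci number in the convention `F 1 = 1, F 2 = 2`,
`F (n+1) = F n + F (n-1)`, i.e. `F n = fib (n+1)`. -/
def F (n : ℕ) : ℕ := Nat.fib (n + 1)

/-- A Zeckendorf decomposition of `N`: a finite set `S` of positive indices
containing no two consecutive integers with `N = ∑_{i ∈ S} F i`. -/
def IsZeckendorf (N : ℕ) (S : Finset ℕ) : Prop :=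
  (∀ i ∈ S, 1 ≤ i) ∧ (∀ i ∈ S, i + 1 ∉ S) ∧ ∑ i ∈ S, F i = N

/-- `p n k` is the number of integers `N ∈ [F n, F (n+1))` whose Zeckendorf
decomposition has exactly `k` summands. -/
noncomputable def p (n k : ℕ) : ℕ :=
  {N : ℕ | F n ≤ N ∧ N < F (n + 1) ∧
    ∃ S : Finset ℕ, IsZeckendorf N S ∧ S.card = k}.ncard

/-- The generating function `G = ∑_{n ≥ 1} ∑_{k ≥ 1} p_{n,k} X^k Y^n`, as a
formal power series in two variables over `ℚ`; variable `0` is `X`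
(tracking `k`) and variable `1` is `Y` (tracking `n`). -/
noncomputable def G : MvPowerSeries (Fin 2) ℚ :=
  fun e => if 1 ≤ e 0 ∧ 1 ≤ e 1 then (p (e 1) (e 0) : ℚ) else 0

/-!
By uniqueness of Zeckendorf decompositions, an integer in `[F n, F (n+1))` is the same as a
non-consecutive set of positive indices with maximum `n`, so `p n k` counts such sets of size `k`.
Removing the maximum `n + 2` leaves a set with entries at most `n`, which either contains `n`
or has entries at most `n - 1`; this gives `p (n+2) (k+1) = p (n+1) (k+1) + p n k`, which is
exactly the coefficientwise form of `G = XY + Y G + X Y² G`.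
-/

open Finset MvPowerSeries

lemma F_pos (n : ℕ) : 0 < F n := Nat.fib_pos.2 n.succ_pos

lemma F_mono : Monotone F := fun _ _ h => Nat.fib_mono (Nat.succ_le_succ h)

lemma F_add_two (n : ℕ) : F (n + 2) = F (n + 1) + F n :=
  Nat.fib_add_two.trans (Nat.add_comm _ _)

lemma eq_of_mem_Ico_F {a b N : ℕ} (ha : N ∈ Set.Ico (F a) (F (a + 1)))
    (hb : N ∈ Set.Ico (F b) (F (b + 1))) : a = b := by
  obtain ⟨ha, ha'⟩ := ha
  obtain ⟨hb, hb'⟩ := hb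
  by_contra hne
  rcases Nat.lt_or_gt_of_ne hne with h | h
  · have := F_mono (show a + 1 ≤ b by omega); omega
  · have := F_mono (show b + 1 ≤ a by omega); omega

def IsZeckendorfSupport (S : Finset ℕ) : Prop :=
  (∀ i ∈ S, 1 ≤ i) ∧ ∀ i ∈ S, i + 1 ∉ S

lemma isZeckendorf_iff {N : ℕ} {S : Finset ℕ} :
    IsZeckendorf N S ↔ IsZeckendorfSupport S ∧ ∑ i ∈ S, F i = N := by
  simp only [IsZeckendorf, IsZeckendorfSupport, and_assoc]

namespace IsZeckendorfSupport

variable {S T : Finset ℕ}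

lemma mono (hS : IsZeckendorfSupport S) (hTS : T ⊆ S) : IsZeckendorfSupport T :=
  ⟨fun i hi => hS.1 i (hTS hi), fun i hi hi' => hS.2 i (hTS hi) (hTS hi')⟩

lemma insert (hT : IsZeckendorfSupport T) {a : ℕ} (ha : 1 ≤ a) (hlt : ∀ i ∈ T, i + 1 < a) :
    IsZeckendorfSupport (insert a T) := by
  refine ⟨fun i hi => ?_, fun i hi hi' => ?_⟩
  · rcases mem_insert.1 hi with rfl | hi
    exacts [ha, hT.1 i hi]
  · rcases mem_insert.1 hi with rfl | hi <;> rcases mem_insert.1 hi' with h | hi'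
    · omega
    · have := hlt _ hi'; omega
    · have := hlt _ hi; omega
    · exact hT.2 i hi hi'

lemma sum_lt (hS : IsZeckendorfSupport S) {m : ℕ} (hm : ∀ i ∈ S, i < m) :
    ∑ i ∈ S, F i < F m := by
  induction S using Finset.induction_on_max generalizing m with
  | empty => simpa using F_pos m
  | insert a s hlt ih =>
    have ha : a ∈ Insert.insert a s := mem_insert_self a s
    obtain ⟨b, rfl⟩ : ∃ b, a = b + 1 := ⟨a - 1, by have := hS.1 _ ha; omega⟩
    have hs : ∀ i ∈ s, i < b := fun i hi => by
      have : i ≠ b := fun h => hS.2 i (mem_insert_of_mem hi) (h ▸ ha)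
      have := hlt i hi; omega
    have := ih (hS.mono (subset_insert _ _)) hs
    rw [sum_insert fun h => (hlt _ h).false]
    calc F (b + 1) + ∑ i ∈ s, F i < F (b + 1) + F b := by omega
      _ = F (b + 2) := (F_add_two b).symm
      _ ≤ F m := F_mono (hm _ ha)

lemma sum_mem_Ico (hS : IsZeckendorfSupport S) {a : ℕ} (ha : a ∈ S) (hle : ∀ i ∈ S, i ≤ a) :
    ∑ i ∈ S, F i ∈ Set.Ico (F a) (F (a + 1)) :=
  ⟨single_le_sum (fun _ _ => Nat.zero_le _) ha, hS.sum_lt fun i hi => Nat.lt_succ_of_le (hle i hi)⟩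

lemma eq_of_sum_eq (hS : IsZeckendorfSupport S) (hT : IsZeckendorfSupport T)
    (hsum : ∑ i ∈ S, F i = ∑ i ∈ T, F i) : S = T := by
  induction S using Finset.induction_on_max generalizing T with
  | empty =>
    refine (eq_empty_of_forall_notMem fun i hi => ?_).symm
    have := single_le_sum (fun _ _ => Nat.zero_le _) hi (f := F)
    have := F_pos i
    simp only [sum_empty] at hsum
    omega
  | insert a s hlt ih =>
    have ha : a ∈ Insert.insert a s := mem_insert_self a s
    have hSa := hS.sum_mem_Ico ha fun i hi => by
      rcases mem_insert.1 hi with rfl | hi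
      exacts [le_rfl, (hlt i hi).le]
    have hTne : T.Nonempty := by
      refine nonempty_iff_ne_empty.2 fun h => ?_
      rw [h, sum_empty] at hsum
      have := hSa.1
      have := F_pos a
      omega
    have hTb := hT.sum_mem_Ico (T.max'_mem hTne) fun i hi => T.le_max' i hi
    have hb : T.max' hTne = a := eq_of_mem_Ico_F (hsum ▸ hTb) hSa
    have haT : a ∈ T := hb ▸ T.max'_mem hTne
    have hrest : ∑ i ∈ s, F i = ∑ i ∈ T.erase a, F i := by
      have := add_sum_erase T F haT
      rw [sum_insert fun h => (hlt _ h).false] at hsum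
      omega
    rw [ih (hS.mono (subset_insert _ _)) (hT.mono (erase_subset _ _)) hrest, insert_erase haT]

end IsZeckendorfSupport

def zeckSupports (n k : ℕ) : Finset (Finset ℕ) :=
  {S ∈ (Icc 1 n).powersetCard k | ∀ i ∈ S, i + 1 ∉ S}

def zeckSupportsWithMax (n k : ℕ) : Finset (Finset ℕ) :=
  {S ∈ zeckSupports n k | n ∈ S}

lemma mem_zeckSupports {n k : ℕ} {S : Finset ℕ} :
    S ∈ zeckSupports n k ↔ IsZeckendorfSupport S ∧ (∀ i ∈ S, i ≤ n) ∧ #S = k := by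
  simp only [zeckSupports, IsZeckendorfSupport, mem_filter, mem_powersetCard, subset_iff,
    mem_Icc]
  grind

lemma mem_zeckSupportsWithMax {n k : ℕ} {S : Finset ℕ} :
    S ∈ zeckSupportsWithMax n k ↔
      IsZeckendorfSupport S ∧ (∀ i ∈ S, i ≤ n) ∧ #S = k ∧ n ∈ S := by
  rw [zeckSupportsWithMax, mem_filter, mem_zeckSupports, and_assoc, and_assoc]

lemma zeckSupportsWithMax_zero_left (k : ℕ) : zeckSupportsWithMax 0 k = ∅ :=
  eq_empty_of_forall_notMem fun _ hS => by
    have := mem_zeckSupportsWithMax.1 hS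
    have := this.1.1 0 this.2.2.2
    omega

lemma zeckSupportsWithMax_zero_right (n : ℕ) : zeckSupportsWithMax n 0 = ∅ :=
  eq_empty_of_forall_notMem fun _ hS => by
    obtain ⟨-, -, hcard, hn⟩ := mem_zeckSupportsWithMax.1 hS
    exact notMem_empty n (card_eq_zero.1 hcard ▸ hn)

lemma card_zeckSupports_zero (k : ℕ) : #(zeckSupports 0 k) = if k = 0 then 1 else 0 := by
  rcases k with _ | k <;> simp [zeckSupports, filter_singleton]

lemma card_zeckSupports_succ (n k : ℕ) :
    #(zeckSupports (n + 1) k) = #(zeckSupports n k) + #(zeckSupportsWithMax (n + 1) k) := by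
  have hnot : {S ∈ zeckSupports (n + 1) k | n + 1 ∉ S} = zeckSupports n k := by
    ext S
    simp only [mem_filter, mem_zeckSupports]
    constructor
    · rintro ⟨⟨hS, hle, hcard⟩, hn⟩
      refine ⟨hS, fun i hi => ?_, hcard⟩
      have : i ≠ n + 1 := fun h => hn (h ▸ hi)
      have := hle i hi
      omega
    · rintro ⟨hS, hle, hcard⟩
      exact ⟨⟨hS, fun i hi => (hle i hi).trans n.le_succ, hcard⟩,
        fun h => by have := hle _ h; omega⟩
  rw [← card_filter_add_card_filter_not (s := zeckSupports (n + 1) k) (n + 1 ∈ ·), hnot,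
    zeckSupportsWithMax, add_comm]

lemma card_zeckSupportsWithMax_succ_succ (n k : ℕ) :
    #(zeckSupportsWithMax (n + 1) (k + 1)) = #(zeckSupports (n - 1) k) := by
  refine card_nbij' (·.erase (n + 1)) (insert (n + 1)) (fun S hS => ?_) (fun T hT => ?_)
    (fun S hS => insert_erase (mem_zeckSupportsWithMax.1 hS).2.2.2)
    (fun T hT => erase_insert fun h => ?_)
  · obtain ⟨hS, hle, hcard, hn⟩ := mem_zeckSupportsWithMax.1 (mem_coe.1 hS)
    refine mem_zeckSupports.2 ⟨hS.mono (erase_subset _ _), fun i hi => ?_, ?_⟩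
    · obtain ⟨hne, hi⟩ := mem_erase.1 hi
      have : i ≠ n := fun h => hS.2 i hi (h ▸ hn)
      have := hle i hi
      omega
    · rw [card_erase_of_mem hn, hcard, Nat.add_sub_cancel]
  · obtain ⟨hT, hle, hcard⟩ := mem_zeckSupports.1 (mem_coe.1 hT)
    have hn : n + 1 ∉ T := fun h => by have := hle _ h; omega
    refine mem_zeckSupportsWithMax.2 ⟨hT.insert (by omega) fun i hi => ?_, fun i hi => ?_,
      by rw [card_insert_of_notMem hn, hcard], mem_insert_self _ _⟩
    · have := hle i hi; have := hT.1 i hi; omega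
    · rcases mem_insert.1 hi with rfl | hi
      · rfl
      · have := hle i hi; omega
  · have := (mem_zeckSupports.1 (mem_coe.1 hT)).2.1 _ h
    omega

lemma p_eq_card (n k : ℕ) : p n k = #(zeckSupportsWithMax n k) := by
  have hset : {N : ℕ | F n ≤ N ∧ N < F (n + 1) ∧ ∃ S : Finset ℕ, IsZeckendorf N S ∧ #S = k}
      = (fun S => ∑ i ∈ S, F i) '' ↑(zeckSupportsWithMax n k) := by
    ext N
    simp only [Set.mem_ofPred_eq, Set.mem_image, mem_coe, mem_zeckSupportsWithMax,
      isZeckendorf_iff]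
    constructor
    · rintro ⟨hl, hu, S, ⟨hS, rfl⟩, hcard⟩
      have hne : S.Nonempty := nonempty_iff_ne_empty.2 fun h => by
        rw [h, sum_empty] at hl
        have := F_pos n
        omega
      have hmax := hS.sum_mem_Ico (S.max'_mem hne) fun i hi => S.le_max' i hi
      have hn : S.max' hne = n := eq_of_mem_Ico_F hmax ⟨hl, hu⟩
      exact ⟨S, ⟨hS, fun i hi => hn ▸ S.le_max' i hi, hcard, hn ▸ S.max'_mem hne⟩, rfl⟩
    · rintro ⟨S, ⟨hS, hle, hcard, hn⟩, rfl⟩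
      obtain ⟨hl, hu⟩ := hS.sum_mem_Ico hn hle
      exact ⟨hl, hu, S, ⟨hS, rfl⟩, hcard⟩
  rw [p, hset, Set.InjOn.ncard_image, Set.ncard_coe_finset]
  intro S hS T hT hsum
  exact (mem_zeckSupportsWithMax.1 hS).1.eq_of_sum_eq (mem_zeckSupportsWithMax.1 hT).1 hsum

lemma p_zero_left (k : ℕ) : p 0 k = 0 := by
  rw [p_eq_card, zeckSupportsWithMax_zero_left, card_empty]

lemma p_zero_right (n : ℕ) : p n 0 = 0 := by
  rw [p_eq_card, zeckSupportsWithMax_zero_right, card_empty]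

lemma p_one (k : ℕ) : p 1 k = if k = 1 then 1 else 0 := by
  rcases k with _ | k
  · exact p_zero_right 1
  · rw [p_eq_card, card_zeckSupportsWithMax_succ_succ, Nat.zero_sub, card_zeckSupports_zero]
    simp

lemma p_add_two (n k : ℕ) : p (n + 2) (k + 1) = p (n + 1) (k + 1) + p n k := by
  rw [p_eq_card, p_eq_card, p_eq_card, card_zeckSupportsWithMax_succ_succ,
    card_zeckSupportsWithMax_succ_succ]
  rcases n with _ | n
  · rw [zeckSupportsWithMax_zero_left, card_empty, add_zero]
  · exact card_zeckSupports_succ n k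

lemma p_sub_sub_eq_ite (n k : ℕ) :
    (p n k : ℚ) - p (n - 1) k - p (n - 2) (k - 1) = if k = 1 ∧ n = 1 then 1 else 0 := by
  match n, k with
  | 0, k => simp [p_zero_left]
  | 1, k => simp [p_zero_left, p_one]
  | n + 2, 0 => simp [p_zero_right]
  | n + 2, k + 1 => simp [p_add_two]

lemma coeff_G (e : Fin 2 →₀ ℕ) : coeff e G = p (e 1) (e 0) := by
  change ite _ _ _ = _
  split_ifs with h
  · rfl
  · rcases not_and_or.1 h with h | h <;>
      simp [Nat.lt_one_iff.1 (not_le.1 h), p_zero_left, p_zero_right]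

lemma X_pow_mul_X_pow {σ R : Type*} [CommSemiring R] (i j : σ) (a b : ℕ) :
    (X i ^ a * X j ^ b : MvPowerSeries σ R) =
      monomial (Finsupp.single i a + Finsupp.single j b) (1 : R) := by
  rw [X_pow_eq, X_pow_eq, monomial_mul_monomial, one_mul]

-- The truncated subtractions are harmless because `p` vanishes when either index is `0`.
lemma coeff_X_zero_pow_mul_X_one_pow_mul_G (a b : ℕ) (e : Fin 2 →₀ ℕ) :
    coeff e (X 0 ^ a * X 1 ^ b * G : MvPowerSeries (Fin 2) ℚ) = p (e 1 - b) (e 0 - a) := by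
  rw [X_pow_mul_X_pow, coeff_monomial_mul]
  split_ifs with h
  · simp [coeff_G]
  · rw [Finsupp.le_def, Fin.forall_fin_two] at h
    simp only [Finsupp.add_apply, Finsupp.single_apply] at h
    rcases not_and_or.1 h with h | h <;>
      simp only [Fin.isValue, ↓reduceIte, one_ne_zero, zero_ne_one, add_zero, zero_add,
        not_le] at h
    · simp [Nat.sub_eq_zero_of_le h.le, p_zero_right]
    · simp [Nat.sub_eq_zero_of_le h.le, p_zero_left]

lemma coeff_X_zero_mul_X_one (e : Fin 2 →₀ ℕ) :
    coeff e (X 0 * X 1 : MvPowerSeries (Fin 2) ℚ) = if e 0 = 1 ∧ e 1 = 1 then 1 else 0 := by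
  rw [← pow_one (X 0), ← pow_one (X 1), X_pow_mul_X_pow, coeff_monomial]
  simp [Finsupp.ext_iff, Fin.forall_fin_two, eq_comm]

/-- The generating function satisfies `(1 - Y - X·Y²)·G = X·Y`,
i.e. `G = XY/(1 - Y - XY²)`. -/
theorem generating_function_eq :
    (1 - MvPowerSeries.X 1 - MvPowerSeries.X 0 * MvPowerSeries.X 1 ^ 2) * G
      = MvPowerSeries.X 0 * MvPowerSeries.X 1 := by
  have hsplit : (1 - X 1 - X 0 * X 1 ^ 2) * G =
      X 0 ^ 0 * X 1 ^ 0 * G - X 0 ^ 0 * X 1 ^ 1 * G - X 0 ^ 1 * X 1 ^ 2 * G := by ring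
  ext e
  rw [hsplit, map_sub, map_sub, coeff_X_zero_pow_mul_X_one_pow_mul_G,
    coeff_X_zero_pow_mul_X_one_pow_mul_G, coeff_X_zero_pow_mul_X_one_pow_mul_G,
    coeff_X_zero_mul_X_one, Nat.sub_zero, Nat.sub_zero]
  exact p_sub_sub_eq_ite (e 1) (e 0)
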